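/- Let f : [0,1]^d → ℝ be integrable, γ ∈ ℝ, and let S* = {x ∈ [0,1]^d : f(x) > γ}. Then for any measurable set S ⊆ [0,1]^d, R(S) − R(S*) = 2 ∫_{Δ(S,S*)} |γ − f(x)| dx, where Δ(S,S*) is the symmetric difference of S and S*. -/

import Mathlib

/-!
Write `σ_T = 𝟙_T − 𝟙_{Tᶜ}`. On the domain, `(γ − f) σ_{S*} = −|γ − f|` pointwise, so `S*` minimises
the risk, and `(γ − f) σ_S + |γ − f|` vanishes where `S` and `S*` agree and equals `2 |γ − f|` on
their symmetric difference, since there the sign of `σ_S` is that of `γ − f`.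
-/

open MeasureTheory

namespace Set

variable {α : Type*}

noncomputable def signIndicator (T : Set α) (x : α) : ℝ :=
  T.indicator (fun _ => 1) x - Tᶜ.indicator (fun _ => 1) x

theorem signIndicator_apply (T : Set α) (x : α) [Decidable (x ∈ T)] :
    T.signIndicator x = if x ∈ T then 1 else -1 := by
  by_cases hx : x ∈ T <;> simp [signIndicator, hx]

theorem mul_signIndicator_of_mem_iff {T : Set α} {x : α} {a : ℝ} (hT : x ∈ T ↔ a < 0) :
    a * T.signIndicator x = -|a| := by
  classical
  rw [signIndicator_apply]
  by_cases ha : a < 0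
  · simp [hT.mpr ha, abs_of_neg ha]
  · simp [mt hT.mp ha, abs_of_nonneg (not_lt.mp ha)]

theorem mul_signIndicator_add_abs_of_mem_iff {S T : Set α} {x : α} {a : ℝ}
    (hT : x ∈ T ↔ a < 0) :
    a * S.signIndicator x + |a| = 2 * (symmDiff S T).indicator (fun _ => |a|) x := by
  classical
  rw [signIndicator_apply, indicator_apply, mem_symmDiff, hT]
  by_cases hS : x ∈ S <;> rcases lt_or_ge a 0 with ha | ha
  all_goals simp [hS, ha, not_lt.mpr, abs_of_neg, abs_of_nonneg]
  all_goals linarith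

end Set

namespace MeasureTheory

variable {α : Type*} [MeasurableSpace α] {μ : Measure α} {s S : Set α} {f : α → ℝ} {γ : ℝ}

theorem measurable_signIndicator (hS : MeasurableSet S) : Measurable S.signIndicator :=
  (measurable_const.indicator hS).sub (measurable_const.indicator hS.compl)

theorem Integrable.mul_signIndicator (hf : Integrable f μ) (hS : MeasurableSet S) :
    Integrable (fun x => f x * S.signIndicator x) μ := by
  classical
  refine hf.mul_bdd (measurable_signIndicator hS).aestronglyMeasurable (c := 1) ?_
  filter_upwards with x
  rw [Set.signIndicator_apply]
  split_ifs <;> simp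

theorem setIntegral_mul_signIndicator_superlevel (hs : MeasurableSet s) :
    ∫ x in s, (γ - f x) * {x ∈ s | γ < f x}.signIndicator x ∂μ = -∫ x in s, |γ - f x| ∂μ := by
  rw [← integral_neg]
  refine setIntegral_congr_fun hs fun x hx => Set.mul_signIndicator_of_mem_iff ?_
  simp [hx]

theorem setIntegral_indicator_of_subset₀ {t : Set α} {g : α → ℝ}
    (ht : NullMeasurableSet t (μ.restrict s)) (hts : t ⊆ s) :
    ∫ x in s, t.indicator g x ∂μ = ∫ x in t, g x ∂μ := by
  rw [integral_indicator₀ ht, Measure.restrict_restrict_of_subset hts]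

open scoped ENNReal in
theorem setIntegral_mul_signIndicator_sub_superlevel (hs : MeasurableSet s) (hμs : μ s ≠ ∞)
    (hf : IntegrableOn f s μ) (hS : MeasurableSet S) (hSs : S ⊆ s) :
    ∫ x in s, (γ - f x) * S.signIndicator x ∂μ
        - ∫ x in s, (γ - f x) * {x ∈ s | γ < f x}.signIndicator x ∂μ
      = 2 * ∫ x in symmDiff S {x ∈ s | γ < f x}, |γ - f x| ∂μ := by
  set Sstar := {x ∈ s | γ < f x}
  have hgap : IntegrableOn (fun x => γ - f x) s μ := (integrableOn_const hμs).sub hf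
  have hΔ : NullMeasurableSet (symmDiff S Sstar) (μ.restrict s) :=
    hS.nullMeasurableSet.symmDiff <| hs.nullMeasurableSet.inter <|
      nullMeasurableSet_lt aemeasurable_const hf.aemeasurable
  have hΔs : symmDiff S Sstar ⊆ s :=
    Set.symmDiff_subset_union.trans (Set.union_subset hSs (Set.sep_subset _ _))
  calc _ = ∫ x in s, ((γ - f x) * S.signIndicator x + |γ - f x|) ∂μ := by
        rw [setIntegral_mul_signIndicator_superlevel hs, sub_neg_eq_add,
          integral_add (hgap.mul_signIndicator hS) hgap.abs]
    _ = ∫ x in s, 2 * (symmDiff S Sstar).indicator (fun x => |γ - f x|) x ∂μ := by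
        refine setIntegral_congr_fun hs fun x hx => Set.mul_signIndicator_add_abs_of_mem_iff ?_
        simp [Sstar, hx]
    _ = _ := by rw [integral_const_mul, setIntegral_indicator_of_subset₀ hΔ hΔs]

end MeasureTheory

/-- Let `f : [0,1]^d → ℝ` be integrable, `γ ∈ ℝ`, and let
`S* = {x ∈ [0,1]^d : f(x) > γ}`. Then for any measurable set `S ⊆ [0,1]^d`,
`R(S) − R(S*) = 2 ∫_{Δ(S,S*)} |γ − f(x)| dx`, where
`R(S) = ∫_{[0,1]^d} (γ − f(x)) (𝟙{x ∈ S} − 𝟙{x ∉ S}) dx` and `Δ(S,S*)` is the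
symmetric difference of `S` and `S*`. -/
theorem statement7 (d : ℕ) (f : (Fin d → ℝ) → ℝ) (γ : ℝ)
    (hf : IntegrableOn f (Set.Icc (0 : Fin d → ℝ) 1) volume)
    (S : Set (Fin d → ℝ)) (hS : MeasurableSet S)
    (hSsub : S ⊆ Set.Icc (0 : Fin d → ℝ) 1) :
    let cube : Set (Fin d → ℝ) := Set.Icc 0 1
    let Sstar : Set (Fin d → ℝ) := {x ∈ cube | γ < f x}
    let R : Set (Fin d → ℝ) → ℝ := fun T => ∫ x in cube,
      (γ - f x) * (Set.indicator T (fun _ => (1 : ℝ)) x - Set.indicator Tᶜ (fun _ => (1 : ℝ)) x)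
    R S - R Sstar = 2 * ∫ x in symmDiff S Sstar, |γ - f x| := by
  exact setIntegral_mul_signIndicator_sub_superlevel measurableSet_Icc
    isCompact_Icc.measure_lt_top.ne hf hS hSsub
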